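/- The two doubling-product forms ⟨X X̲ Y⟩ and ⟨X Y̲ Y⟩ give the same operator: X ⊗ [X, X̲] ⊗ [X̲, Y] ⊗ Y = X ⊗ [X, Y̲] ⊗ [Y̲, Y] ⊗ Y = −2 · X ⊗ X̄ ⊗ Ȳ ⊗ Y as 81×81 matrices. -/
import Mathlib

open Matrix Complex

noncomputable def X : Matrix (Fin 3) (Fin 3) ℂ :=
  (Real.sqrt 2 : ℂ)⁻¹ • !![0, 1, 0; 1, 0, 1; 0, 1, 0]

noncomputable def Y : Matrix (Fin 3) (Fin 3) ℂ :=
  (Real.sqrt 2 : ℂ)⁻¹ • !![0, -I, 0; I, 0, -I; 0, I, 0]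

def Z : Matrix (Fin 3) (Fin 3) ℂ := !![1, 0, 0; 0, 0, 0; 0, 0, -1]

noncomputable def Xb : Matrix (Fin 3) (Fin 3) ℂ := Y * Z + Z * Y
noncomputable def Yb : Matrix (Fin 3) (Fin 3) ℂ := Z * X + X * Z
noncomputable def Zb : Matrix (Fin 3) (Fin 3) ℂ := X * Y + Y * X
noncomputable def Xu : Matrix (Fin 3) (Fin 3) ℂ := Y ^ 2 - Z ^ 2
noncomputable def Yu : Matrix (Fin 3) (Fin 3) ℂ := Z ^ 2 - X ^ 2
noncomputable def Zu : Matrix (Fin 3) (Fin 3) ℂ := X ^ 2 - Y ^ 2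

lemma hs : (Real.sqrt 2 : ℂ) * (Real.sqrt 2 : ℂ) = 2 := by
  rw [← Complex.ofReal_mul, Real.mul_self_sqrt (by norm_num)]
  norm_num

lemma hs' : ((Real.sqrt 2 : ℂ))⁻¹ * ((Real.sqrt 2 : ℂ))⁻¹ = 2⁻¹ := by
  rw [← mul_inv, hs]

lemma Xu_eq : Xu = !![-(1/2), 0, -(1/2); 0, 1, 0; -(1/2), 0, -(1/2)] := by
  ext i j
  fin_cases i <;> fin_cases j <;>
    simp [Xu, Y, Z, Matrix.mul_apply, Fin.sum_univ_three, pow_two] <;>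
    ring_nf <;> norm_num [Matrix.vecHead, Matrix.vecTail, sq, hs, hs']

lemma Yu_eq : Yu = !![1/2, 0, -(1/2); 0, -1, 0; -(1/2), 0, 1/2] := by
  ext i j
  fin_cases i <;> fin_cases j <;>
    simp [Yu, X, Z, Matrix.mul_apply, Fin.sum_univ_three, pow_two] <;>
    ring_nf <;> norm_num [Matrix.vecHead, Matrix.vecTail, sq, hs, hs']

lemma Xb_eq : Xb = (Real.sqrt 2 : ℂ)⁻¹ • !![0, -I, 0; I, 0, I; 0, -I, 0] := by
  ext i j
  fin_cases i <;> fin_cases j <;>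
    simp [Xb, Y, Z, Matrix.mul_apply, Fin.sum_univ_three, Matrix.vecHead, Matrix.vecTail] <;>
    ring_nf

lemma Yb_eq : Yb = (Real.sqrt 2 : ℂ)⁻¹ • !![0, 1, 0; 1, 0, -1; 0, -1, 0] := by
  ext i j
  fin_cases i <;> fin_cases j <;>
    simp [Yb, X, Z, Matrix.mul_apply, Fin.sum_univ_three, Matrix.vecHead, Matrix.vecTail] <;>
    ring_nf

lemma hA : X * Xu - Xu * X = (2 * I) • Xb := by
  rw [Xu_eq, Xb_eq]
  ext i j
  fin_cases i <;> fin_cases j <;>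
    simp [X, Matrix.mul_apply, Fin.sum_univ_three] <;> ring_nf <;> norm_num [Matrix.vecHead, Matrix.vecTail, I_sq]

lemma hB : X * Yu - Yu * X = (-I) • Xb := by
  rw [Yu_eq, Xb_eq]
  ext i j
  fin_cases i <;> fin_cases j <;>
    simp [X, Matrix.mul_apply, Fin.sum_univ_three] <;> ring_nf <;> norm_num [Matrix.vecHead, Matrix.vecTail, I_sq]

lemma hC : Xu * Y - Y * Xu = I • Yb := by
  rw [Xu_eq, Yb_eq]
  ext i j
  fin_cases i <;> fin_cases j <;>
    simp [Y, Matrix.mul_apply, Fin.sum_univ_three] <;> ring_nf <;> norm_num [Matrix.vecHead, Matrix.vecTail, I_sq]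

lemma hD : Yu * Y - Y * Yu = (-(2 * I)) • Yb := by
  rw [Yu_eq, Yb_eq]
  ext i j
  fin_cases i <;> fin_cases j <;>
    simp [Y, Matrix.mul_apply, Fin.sum_univ_three] <;> ring_nf <;> norm_num [Matrix.vecHead, Matrix.vecTail, I_sq]

open Kronecker in
theorem doubling_product_two_forms :
    X ⊗ₖ (X * Xu - Xu * X) ⊗ₖ (Xu * Y - Y * Xu) ⊗ₖ Y =
      X ⊗ₖ (X * Yu - Yu * X) ⊗ₖ (Yu * Y - Y * Yu) ⊗ₖ Y ∧
    X ⊗ₖ (X * Xu - Xu * X) ⊗ₖ (Xu * Y - Y * Xu) ⊗ₖ Y =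
      (-2 : ℂ) • (X ⊗ₖ Xb ⊗ₖ Yb ⊗ₖ Y) := by
  have e1 : X ⊗ₖ (X * Xu - Xu * X) ⊗ₖ (Xu * Y - Y * Xu) ⊗ₖ Y =
      ((2 * I) * I) • (X ⊗ₖ Xb ⊗ₖ Yb ⊗ₖ Y) := by
    rw [hA, hC]
    simp only [Matrix.kronecker_smul, Matrix.smul_kronecker, smul_smul]
    congr 1
    ring
  have e2 : X ⊗ₖ (X * Yu - Yu * X) ⊗ₖ (Yu * Y - Y * Yu) ⊗ₖ Y =
      ((-I) * (-(2 * I))) • (X ⊗ₖ Xb ⊗ₖ Yb ⊗ₖ Y) := by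
    rw [hB, hD]
    simp only [Matrix.kronecker_smul, Matrix.smul_kronecker, smul_smul]
    congr 1
    ring
  have c1 : (2 * I) * I = (-2 : ℂ) := by linear_combination (2:ℂ) * Complex.I_sq
  have c2 : (-I) * (-(2 * I)) = (-2 : ℂ) := by linear_combination (2:ℂ) * Complex.I_sq
  rw [e1, e2, c1, c2]
  exact ⟨rfl, rfl⟩
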